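/- Let M be a countable relational structure whose relations hold only of repetition-free tuples. For tuples ā, b̄ ∈ Mⁿ without repetitions, if π₀ ∈ Sym(M) maps ā to b̄ and π₀ extends to an automorphism of the structure N built over M, then ā ∈ P_{(n,ℓ)}^M if and only if b̄ ∈ P_{(n,ℓ)}^M. -/

import Mathlib

/-! The structure `N = N_M` built from a relational structure `M` in the proof of the
main theorem.  `M` has relations `P i` of arity `k i` (indexed by `i : ι`, playing the
role of the pairs `(n, ℓ)`).  The domain of `N` is the disjoint union of a copy of `M`
(the predicate `P^N`), the constant `e`, and the sorts
`Q i = {(i, j, ā) : ā ∈ M^{k i}, j ≤ ω, and j = ω only if ā ∈ P_i^M}`;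
`F i t` projects an element of `Q i` to its `t`-th coordinate, and `G i j` replaces the
index of an element of `Q i` by `j` (both send everything else to `e`).  Here the index
`j ≤ ω` is represented by an element of `ℕ∞`. -/

namespace Constr

variable {M ι : Type} [DecidableEq ι] (k : ι → ℕ) (P : ∀ i, (Fin (k i) → M) → Prop)

/-- The elements of the sort `Q i`. -/
abbrev Qsort (i : ι) : Type := { x : (Fin (k i) → M) × ℕ∞ // x.2 = ⊤ → P i x.1 }

/-- The domain of `N`: a copy of `M`, the point `e`, and the sorts `Q i`. -/
def Ndom : Type := (M ⊕ Unit) ⊕ (Σ i : ι, Qsort k P i)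

/-- The interpretation of the constant `c` of `N`. -/
def e : Ndom k P := Sum.inl (Sum.inr ())

/-- The inclusion of `M` (the predicate `P^N`) into the domain of `N`. -/
def pin (a : M) : Ndom k P := Sum.inl (Sum.inl a)

/-- The inclusion of the sort `Q i` into the domain of `N`. -/
def qin (i : ι) (x : Qsort k P i) : Ndom k P := Sum.inr ⟨i, x⟩

/-- The unary function `F i t` of `N`: the projection of `Q i` onto the `t`-th
`M`-coordinate (and `e` elsewhere). -/
def F (i : ι) (t : Fin (k i)) : Ndom k P → Ndom k P
  | Sum.inr ⟨i', x⟩ =>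
      if h : i' = i then pin k P (x.1.1 (Fin.cast (congrArg k h).symm t)) else e k P
  | _ => e k P

/-- The unary function `G i j` of `N`: replacing the index of an element of `Q i`
by `j < ω` (and `e` elsewhere). -/
def G (i : ι) (j : ℕ) : Ndom k P → Ndom k P
  | Sum.inr ⟨i', x⟩ =>
      if h : i' = i then qin k P i' ⟨(x.1.1, (j : ℕ∞)), fun hj => absurd hj (by simp)⟩
      else e k P
  | _ => e k P

/-- A permutation of the domain of `N` is an automorphism of `N` iff it fixes the
constant `e`, preserves the predicates `P` and `Q i`, and commutes with the functions
`F i t` and `G i j`. -/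
structure IsAutN (π : Equiv.Perm (Ndom k P)) : Prop where
  fix_e : π (e k P) = e k P
  map_P : ∀ a : M, ∃ b : M, π (pin k P a) = pin k P b
  map_Q : ∀ (i : ι) (x : Qsort k P i), ∃ y : Qsort k P i, π (qin k P i x) = qin k P i y
  comm_F : ∀ (i : ι) (t : Fin (k i)) (x : Ndom k P), π (F k P i t x) = F k P i t (π x)
  comm_G : ∀ (i : ι) (j : ℕ) (x : Ndom k P), π (G k P i j x) = G k P i j (π x)

/-- A permutation of `M` is an automorphism of `M` iff it preserves every relation. -/
def IsAutM (σ : Equiv.Perm M) : Prop := ∀ (i : ι) (v : Fin (k i) → M), P i (σ ∘ v) ↔ P i v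

end Constr

/-! `P i ā` holds iff `N` realizes the quantifier-free type of `(i, ω, ā)` over `ā`, namely
`{F i t x = a t : t} ∪ {G i j x ≠ x : j < ω}` (together with `x ∈ Q i`). An automorphism of `N`
extending `σ` maps the realizations of this type over `ā` bijectively onto those over `σ ∘ ā`. -/

namespace Constr

variable {M ι : Type} {k : ι → ℕ} {P : ∀ i, (Fin (k i) → M) → Prop}

lemma pin_injective : Function.Injective (pin k P) :=
  Sum.inl_injective.comp Sum.inl_injective

lemma qin_injective (i : ι) : Function.Injective (qin k P i) := fun _ _ h =>
  eq_of_heq (Sigma.mk.inj_iff.mp (Sum.inr.inj h)).2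

variable [DecidableEq ι]

@[simp]
lemma F_qin (i : ι) (t : Fin (k i)) (x : Qsort k P i) :
    F k P i t (qin k P i x) = pin k P (x.1.1 t) := by
  simp [F, qin]

@[simp]
lemma G_qin (i : ι) (j : ℕ) (x : Qsort k P i) :
    G k P i j (qin k P i x) = qin k P i ⟨(x.1.1, j), fun hj => absurd hj (by simp)⟩ := by
  simp only [G, qin]
  exact dif_pos rfl

variable (k P) in
/-- `G i 0 x ≠ e` expresses `x ∈ Q i`. -/
def IsTopOver (i : ι) (v : Fin (k i) → M) (x : Ndom k P) : Prop :=
  G k P i 0 x ≠ e k P ∧ (∀ t, F k P i t x = pin k P (v t)) ∧ ∀ j : ℕ, G k P i j x ≠ x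

lemma isTopOver_qin {i : ι} {v : Fin (k i) → M} (hv : P i v) :
    IsTopOver k P i v (qin k P i ⟨(v, ⊤), fun _ => hv⟩) := by
  refine ⟨by rw [G_qin]; exact Sum.inr_ne_inl, fun t => F_qin .., fun j h => ?_⟩
  rw [G_qin] at h
  simpa using congrArg (fun x : Qsort k P i => x.1.2) (qin_injective i h)

lemma IsTopOver.rel {i : ι} {v : Fin (k i) → M} {x : Ndom k P} (hx : IsTopOver k P i v x) :
    P i v := by
  obtain ⟨hQ, hF, hG⟩ := hx
  rcases x with (_ | _) | ⟨i', y⟩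
  · exact absurd rfl hQ
  · exact absurd rfl hQ
  obtain rfl : i' = i := by
    by_contra hne
    exact hQ (by simp [G, hne])
  have hcoord : y.1.1 = v := funext fun t => pin_injective ((F_qin i' t y).symm.trans (hF t))
  by_cases hidx : y.1.2 = ⊤
  · exact hcoord ▸ y.2 hidx
  · obtain ⟨j, hj⟩ := ENat.ne_top_iff_exists.mp hidx
    refine absurd ?_ (hG j)
    change G k P i' j (qin k P i' y) = qin k P i' y
    rw [G_qin]
    exact congrArg _ (Subtype.ext (Prod.ext rfl hj))

lemma exists_isTopOver_iff (i : ι) (v : Fin (k i) → M) :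
    (∃ x, IsTopOver k P i v x) ↔ P i v :=
  ⟨fun ⟨_, hx⟩ => hx.rel, fun hv => ⟨_, isTopOver_qin hv⟩⟩

lemma IsAutN.isTopOver_apply_iff {π : Equiv.Perm (Ndom k P)} (hπ : IsAutN k P π)
    {σ : Equiv.Perm M} (hσ : ∀ x : M, π (pin k P x) = pin k P (σ x))
    (i : ι) (v : Fin (k i) → M) (x : Ndom k P) :
    IsTopOver k P i (σ ∘ v) (π x) ↔ IsTopOver k P i v x := by
  refine and_congr ?_ (and_congr (forall_congr' fun t => ?_) (forall_congr' fun j => ?_))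
  · rw [← hπ.comm_G, π.injective.ne_iff' hπ.fix_e]
  · rw [Function.comp_apply, ← hσ, ← hπ.comm_F, π.injective.eq_iff]
  · rw [← hπ.comm_G, π.injective.ne_iff]

theorem rel_transfer_of_extends_general {M ι : Type} [DecidableEq ι]
    (k : ι → ℕ) (P : ∀ i, (Fin (k i) → M) → Prop)
    (i : ι) (a b : Fin (k i) → M)
    (σ : Equiv.Perm M) (hab : ⇑σ ∘ a = b)
    (hext : ∃ π : Equiv.Perm (Ndom k P), IsAutN k P π ∧
      ∀ x : M, π (pin k P x) = pin k P (σ x)) :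
    P i a ↔ P i b := by
  obtain ⟨π, hπ, hσ⟩ := hext
  calc P i a ↔ ∃ x, IsTopOver k P i a x := (exists_isTopOver_iff i a).symm
    _ ↔ ∃ x, IsTopOver k P i b (π x) := by simp only [← hab, hπ.isTopOver_apply_iff hσ]
    _ ↔ P i b := π.surjective.exists.symm.trans (exists_isTopOver_iff i b)

/-- For repetition-free tuples `ā, b̄ ∈ Mⁿ`, if a permutation `π₀` of
`M` maps `ā` to `b̄` and `π₀` extends to an automorphism of the structure `N` built over
`M`, then `ā ∈ P_{(n,ℓ)}^M` iff `b̄ ∈ P_{(n,ℓ)}^M`. -/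
theorem rel_transfer_of_extends {M ι : Type} [DecidableEq ι] [Countable M] [Countable ι]
    (k : ι → ℕ) (P : ∀ i, (Fin (k i) → M) → Prop)
    (hP : ∀ (i : ι) (v : Fin (k i) → M), P i v → Function.Injective v)
    (i : ι) (a b : Fin (k i) → M)
    (ha : Function.Injective a) (hb : Function.Injective b)
    (σ : Equiv.Perm M) (hab : ⇑σ ∘ a = b)
    (hext : ∃ π : Equiv.Perm (Ndom k P), IsAutN k P π ∧
      ∀ x : M, π (pin k P x) = pin k P (σ x)) :
    P i a ↔ P i b :=
  rel_transfer_of_extends_general k P i a b σ hab hext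

end Constr
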